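/- arXiv:1912.07037 — 2 statements merged into one kernel-verified Lean document; each statement's English description precedes it below -/
import Mathlib

section
/- Let L > 0 and β be a real number, and let ψ, p : ℝ × [0,L] → ℝ be twice continuously differentiable (jointly in (t,x)). Assume that for every t and all continuously differentiable test functions η, q : [0,L] → ℝ the weak formulation with α = 0 holds: ∫₀ᴸ (1 − 2β p(t,x)) ∂ₜp(t,x) η(x) dx = − ∫₀ᴸ ∂ₓψ(t,x) η'(x) dx and ∫₀ᴸ (1 − 2β p(t,x)) ∂ₜψ(t,x) q(x) dx = ∫₀ᴸ (1 − 2β p(t,x)) p(t,x) q(x) dx. Then the energy is conserved exactly: for all times s, t one has E(ψ(t,·), p(t,·)) = E(ψ(s,·), p(s,·)), where E(ψ,p) = ∫₀ᴸ ½ (∂ₓψ)² + (½ − (2β/3) p) p² dx. -/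
open MeasureTheory intervalIntegral

/-- Partial derivative in time of a function `f : ℝ × ℝ → ℝ`. -/
noncomputable def Dt (f : ℝ × ℝ → ℝ) (u : ℝ × ℝ) : ℝ :=
  deriv (fun s => f (s, u.2)) u.1

/-- Partial derivative in space of a function `f : ℝ × ℝ → ℝ`. -/
noncomputable def Dx (f : ℝ × ℝ → ℝ) (u : ℝ × ℝ) : ℝ :=
  deriv (fun y => f (u.1, y)) u.2

/-! Testing the first weak equation with `η = ∂ₜψ(t,·)` and the second with `q = ∂ₜp(t,·)`, and
using `∂ₜ∂ₓψ = ∂ₓ∂ₜψ`, shows that the time derivative of the energy density,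
`∂ₓψ ∂ₓ∂ₜψ + (1 − 2βp) p ∂ₜp`, integrates to zero over the interval at every time. Since the
density is `C¹`, the energy may be differentiated under the integral sign, so its derivative
vanishes identically and the energy is constant. -/

section Slices

variable {E : Type*} [NormedAddCommGroup E] [NormedSpace ℝ E] {f : ℝ × ℝ → E} {u : ℝ × ℝ}

lemma DifferentiableAt.hasDerivAt_slice_fst (hf : DifferentiableAt ℝ f u) :
    HasDerivAt (fun s => f (s, u.2)) (fderiv ℝ f u (1, 0)) u.1 :=
  hf.hasFDerivAt.comp_hasDerivAt u.1 ((hasDerivAt_id u.1).prodMk (hasDerivAt_const u.1 u.2))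

lemma DifferentiableAt.hasDerivAt_slice_snd (hf : DifferentiableAt ℝ f u) :
    HasDerivAt (fun y => f (u.1, y)) (fderiv ℝ f u (0, 1)) u.2 :=
  hf.hasFDerivAt.comp_hasDerivAt u.2 ((hasDerivAt_const u.2 u.1).prodMk (hasDerivAt_id u.2))

end Slices

section PartialDerivatives

variable {f : ℝ × ℝ → ℝ}

lemma Dt_eq_fderiv {u : ℝ × ℝ} (hf : DifferentiableAt ℝ f u) : Dt f u = fderiv ℝ f u (1, 0) :=
  hf.hasDerivAt_slice_fst.deriv

lemma Dx_eq_fderiv {u : ℝ × ℝ} (hf : DifferentiableAt ℝ f u) : Dx f u = fderiv ℝ f u (0, 1) :=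
  hf.hasDerivAt_slice_snd.deriv

lemma DifferentiableAt.hasDerivAt_Dt {u : ℝ × ℝ} (hf : DifferentiableAt ℝ f u) :
    HasDerivAt (fun s => f (s, u.2)) (Dt f u) u.1 :=
  Dt_eq_fderiv hf ▸ hf.hasDerivAt_slice_fst

lemma contDiff_Dt {m n : WithTop ℕ∞} (hf : ContDiff ℝ n f) (hmn : m + 1 ≤ n) :
    ContDiff ℝ m (Dt f) := by
  have hf' : Differentiable ℝ f :=
    hf.differentiable (ENat.one_le_iff_ne_zero_withTop.mp (le_add_self.trans hmn))
  rw [show Dt f = fun u => fderiv ℝ f u (1, 0) from funext fun u => Dt_eq_fderiv (hf' u)]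
  exact (hf.fderiv_right hmn).clm_apply contDiff_const

lemma contDiff_Dx {m n : WithTop ℕ∞} (hf : ContDiff ℝ n f) (hmn : m + 1 ≤ n) :
    ContDiff ℝ m (Dx f) := by
  have hf' : Differentiable ℝ f :=
    hf.differentiable (ENat.one_le_iff_ne_zero_withTop.mp (le_add_self.trans hmn))
  rw [show Dx f = fun u => fderiv ℝ f u (0, 1) from funext fun u => Dx_eq_fderiv (hf' u)]
  exact (hf.fderiv_right hmn).clm_apply contDiff_const

lemma Dt_Dx_comm (hf : ContDiff ℝ 2 f) (u : ℝ × ℝ) : Dt (Dx f) u = Dx (Dt f) u := by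
  have hf' : Differentiable ℝ f := hf.differentiable two_ne_zero
  have hf'' : DifferentiableAt ℝ (fderiv ℝ f) u :=
    (hf.fderiv_right (m := 1) le_rfl).differentiable one_ne_zero u
  have hDx : Dx f = fun v => fderiv ℝ f v (0, 1) := funext fun v => Dx_eq_fderiv (hf' v)
  have hDt : Dt f = fun v => fderiv ℝ f v (1, 0) := funext fun v => Dt_eq_fderiv (hf' v)
  calc Dt (Dx f) u = fderiv ℝ (fderiv ℝ f) u (1, 0) (0, 1) := by
        rw [hDx]
        exact (hf''.hasDerivAt_slice_fst.clm_apply (hasDerivAt_const _ _)).deriv.trans (by simp)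
    _ = fderiv ℝ (fderiv ℝ f) u (0, 1) (1, 0) :=
        second_derivative_symmetric (fun v => (hf' v).hasFDerivAt) hf''.hasFDerivAt _ _
    _ = Dx (Dt f) u := by
        rw [hDt]
        exact ((hf''.hasDerivAt_slice_snd.clm_apply (hasDerivAt_const _ _)).deriv.trans
          (by simp)).symm

end PartialDerivatives

lemma hasDerivAt_intervalIntegral_of_contDiff {F : ℝ × ℝ → ℝ} (hF : ContDiff ℝ 1 F)
    (a b t₀ : ℝ) :
    HasDerivAt (fun t => ∫ x in a..b, F (t, x)) (∫ x in a..b, Dt F (t₀, x)) t₀ := by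
  have hDt : Continuous (Dt F) := (contDiff_Dt (m := 0) hF (by simp)).continuous
  have slice {G : ℝ × ℝ → ℝ} (hG : Continuous G) (t : ℝ) : Continuous fun x => G (t, x) :=
    hG.comp (continuous_const.prodMk continuous_id)
  obtain ⟨C, hC⟩ := ((isCompact_closedBall t₀ 1).prod isCompact_uIcc).exists_bound_of_continuousOn
    (s := Metric.closedBall t₀ 1 ×ˢ Set.uIcc a b) hDt.continuousOn
  exact (hasDerivAt_integral_of_dominated_loc_of_deriv_le (bound := fun _ => C)
    (Metric.closedBall_mem_nhds t₀ one_pos)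
    (.of_forall fun t => (slice hF.continuous t).aestronglyMeasurable)
    ((slice hF.continuous t₀).intervalIntegrable a b) (slice hDt t₀).aestronglyMeasurable
    (.of_forall fun x hx t ht => hC (t, x) ⟨ht, Set.uIoc_subset_uIcc hx⟩) intervalIntegrable_const
    (.of_forall fun x _ t _ => ((hF.differentiable one_ne_zero) (t, x)).hasDerivAt_Dt)).2

noncomputable def energyDensity (β : ℝ) (ψ p : ℝ × ℝ → ℝ) (u : ℝ × ℝ) : ℝ :=
  1 / 2 * Dx ψ u ^ 2 + (1 / 2 - 2 * β / 3 * p u) * p u ^ 2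

section Energy

variable {β : ℝ} {ψ p : ℝ × ℝ → ℝ}

lemma contDiff_energyDensity {m n : WithTop ℕ∞} (hψ : ContDiff ℝ n ψ) (hmn : m + 1 ≤ n)
    (hp : ContDiff ℝ m p) : ContDiff ℝ m (energyDensity β ψ p) := by
  have hDxψ := contDiff_Dx hψ hmn
  unfold energyDensity
  fun_prop

lemma Dt_energyDensity {u : ℝ × ℝ} (hψ : DifferentiableAt ℝ (Dx ψ) u)
    (hp : DifferentiableAt ℝ p u) :
    Dt (energyDensity β ψ p) u = Dx ψ u * Dt (Dx ψ) u + (1 - 2 * β * p u) * p u * Dt p u := by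
  have H : HasDerivAt (fun s => energyDensity β ψ p (s, u.2))
      (1 / 2 * (2 * Dx ψ u ^ 1 * Dt (Dx ψ) u) + ((0 - 2 * β / 3 * Dt p u) * p u ^ 2
        + (1 / 2 - 2 * β / 3 * p u) * (2 * p u ^ 1 * Dt p u))) u.1 := by
    have := ((hψ.hasDerivAt_Dt.pow 2).const_mul (1 / 2)).add
      (((hasDerivAt_const u.1 (1 / 2)).sub (hp.hasDerivAt_Dt.const_mul (2 * β / 3))).mul
        (hp.hasDerivAt_Dt.pow 2))
    exact_mod_cast this
  rw [Dt, H.deriv]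
  ring

lemma integral_Dt_energyDensity_eq_zero {a b t : ℝ} (hψ : ContDiff ℝ 2 ψ) (hp : ContDiff ℝ 2 p)
    (hweak1 : ∀ η : ℝ → ℝ, ContDiff ℝ 1 η →
      (∫ x in a..b, (1 - 2 * β * p (t, x)) * Dt p (t, x) * η x)
        = - ∫ x in a..b, Dx ψ (t, x) * deriv η x)
    (hweak2 : ∀ q : ℝ → ℝ, ContDiff ℝ 1 q →
      (∫ x in a..b, (1 - 2 * β * p (t, x)) * Dt ψ (t, x) * q x)
        = ∫ x in a..b, (1 - 2 * β * p (t, x)) * p (t, x) * q x) :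
    ∫ x in a..b, Dt (energyDensity β ψ p) (t, x) = 0 := by
  have hp1 : ContDiff ℝ 1 p := hp.of_le one_le_two
  have hDxψ : ContDiff ℝ 1 (Dx ψ) := contDiff_Dx hψ (by norm_num)
  have hDtψ : ContDiff ℝ 1 (Dt ψ) := contDiff_Dt hψ (by norm_num)
  have hDtp : ContDiff ℝ 1 (Dt p) := contDiff_Dt hp (by norm_num)
  have hDxDtψ : Continuous (Dx (Dt ψ)) := (contDiff_Dx (m := 0) hDtψ (by simp)).continuous
  have slice {G : ℝ × ℝ → ℝ} (hG : ContDiff ℝ 1 G) : ContDiff ℝ 1 fun x => G (t, x) :=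
    hG.comp (contDiff_const.prodMk contDiff_id)
  have hpoint : ∀ x, Dt (energyDensity β ψ p) (t, x)
      = Dx ψ (t, x) * Dx (Dt ψ) (t, x) + (1 - 2 * β * p (t, x)) * p (t, x) * Dt p (t, x) :=
    fun x => by
      rw [Dt_energyDensity (hDxψ.differentiable one_ne_zero _) (hp1.differentiable one_ne_zero _),
        Dt_Dx_comm hψ]
  have hkinetic : ∫ x in a..b, Dx ψ (t, x) * Dx (Dt ψ) (t, x)
      = - ∫ x in a..b, (1 - 2 * β * p (t, x)) * Dt p (t, x) * Dt ψ (t, x) := by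
    rw [hweak1 _ (slice hDtψ), neg_neg]
    rfl
  have hpotential : ∫ x in a..b, (1 - 2 * β * p (t, x)) * p (t, x) * Dt p (t, x)
      = ∫ x in a..b, (1 - 2 * β * p (t, x)) * Dt p (t, x) * Dt ψ (t, x) := by
    rw [← hweak2 _ (slice hDtp)]
    exact integral_congr fun x _ => by ring
  rw [integral_congr fun x _ => hpoint x, intervalIntegral.integral_add, hkinetic, hpotential,
    neg_add_cancel]
  all_goals
    apply Continuous.intervalIntegrable
    fun_prop

end Energy

theorem westervelt_energy_conservation_general (L β : ℝ)
    (ψ p : ℝ × ℝ → ℝ) (hψ : ContDiff ℝ 2 ψ) (hp : ContDiff ℝ 2 p)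
    (hweak1 : ∀ t : ℝ, ∀ η : ℝ → ℝ, ContDiff ℝ 1 η →
      (∫ x in (0 : ℝ)..L, (1 - 2 * β * p (t, x)) * Dt p (t, x) * η x)
        = - ∫ x in (0 : ℝ)..L, Dx ψ (t, x) * deriv η x)
    (hweak2 : ∀ t : ℝ, ∀ q : ℝ → ℝ, ContDiff ℝ 1 q →
      (∫ x in (0 : ℝ)..L, (1 - 2 * β * p (t, x)) * Dt ψ (t, x) * q x)
        = ∫ x in (0 : ℝ)..L, (1 - 2 * β * p (t, x)) * p (t, x) * q x) :
    ∀ s t : ℝ,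
      (∫ x in (0 : ℝ)..L, (1 / 2) * (Dx ψ (t, x)) ^ 2
          + (1 / 2 - (2 * β / 3) * p (t, x)) * (p (t, x)) ^ 2)
        = ∫ x in (0 : ℝ)..L, (1 / 2) * (Dx ψ (s, x)) ^ 2
          + (1 / 2 - (2 * β / 3) * p (s, x)) * (p (s, x)) ^ 2 := by
  have hE : ∀ t, HasDerivAt (fun t => ∫ x in (0 : ℝ)..L, energyDensity β ψ p (t, x)) 0 t :=
    fun t => (hasDerivAt_intervalIntegral_of_contDiff
      (contDiff_energyDensity hψ (by norm_num) (hp.of_le one_le_two)) 0 L t).congr_deriv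
      (integral_Dt_energyDensity_eq_zero hψ hp (hweak1 t) (hweak2 t))
  intro s t
  exact is_const_of_deriv_eq_zero (fun t => (hE t).differentiableAt) (fun t => (hE t).deriv) t s

/-- Corollary of Lemma 3 of the paper for `α = 0`: weak solutions of the
nondissipative first-order Westervelt system conserve the acoustic energy
`E(ψ,p) = ∫₀ᴸ ½ (∂ₓψ)² + (½ − (2β/3) p) p² dx` exactly for all times. -/
theorem westervelt_energy_conservation (L β : ℝ) (hL : 0 < L)
    (ψ p : ℝ × ℝ → ℝ) (hψ : ContDiff ℝ 2 ψ) (hp : ContDiff ℝ 2 p)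
    (hweak1 : ∀ t : ℝ, ∀ η : ℝ → ℝ, ContDiff ℝ 1 η →
      (∫ x in (0 : ℝ)..L, (1 - 2 * β * p (t, x)) * Dt p (t, x) * η x)
        = - ∫ x in (0 : ℝ)..L, Dx ψ (t, x) * deriv η x)
    (hweak2 : ∀ t : ℝ, ∀ q : ℝ → ℝ, ContDiff ℝ 1 q →
      (∫ x in (0 : ℝ)..L, (1 - 2 * β * p (t, x)) * Dt ψ (t, x) * q x)
        = ∫ x in (0 : ℝ)..L, (1 - 2 * β * p (t, x)) * p (t, x) * q x) :
    ∀ s t : ℝ,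
      (∫ x in (0 : ℝ)..L, (1 / 2) * (Dx ψ (t, x)) ^ 2
          + (1 / 2 - (2 * β / 3) * p (t, x)) * (p (t, x)) ^ 2)
        = ∫ x in (0 : ℝ)..L, (1 / 2) * (Dx ψ (s, x)) ^ 2
          + (1 / 2 - (2 * β / 3) * p (s, x)) * (p (s, x)) ^ 2 :=
  westervelt_energy_conservation_general L β ψ p hψ hp hweak1 hweak2
end

section
/- Let N be a natural number, m ∈ ℝᴺ with all entries mᵢ > 0, K a symmetric N×N real matrix, α, β real numbers, τ > 0, and t₀ real. Let ψⁿ, ψⁿ⁺¹, pⁿ, pⁿ⁺¹ ∈ ℝᴺ and let ψ, p : ℝ → ℝᴺ be the affine interpolants ψ(t) = ψⁿ + ((t − t₀)/τ)(ψⁿ⁺¹ − ψⁿ) and p(t) = pⁿ + ((t − t₀)/τ)(pⁿ⁺¹ − pⁿ). Write ψ̄ = (ψⁿ + ψⁿ⁺¹)/2 and p̄ = (pⁿ + pⁿ⁺¹)/2. Then the following are equivalent: (a) for every constant test function η ∈ ℝᴺ, ∫_{t₀}^{t₀+τ} [ Σᵢ mᵢ (1 − 2β pᵢ(t)) pᵢ'(t)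 ηᵢ + α (ψ'(t))ᵀ K η + (ψ(t))ᵀ K η ] dt = 0, and for every constant test function q̃ ∈ ℝᴺ, ∫_{t₀}^{t₀+τ} Σᵢ mᵢ (1 − 2β pᵢ(t)) (ψᵢ'(t) − pᵢ(t)) q̃ᵢ dt = 0; (b) for every index i, mᵢ (1 − 2β p̄ᵢ)(pᵢⁿ⁺¹ − pᵢⁿ)/τ + α (K(ψⁿ⁺¹ − ψⁿ))ᵢ/τ + (Kψ̄)ᵢ = 0, and (1 − 2β p̄ᵢ)(ψᵢⁿ⁺¹ − ψᵢⁿ)/τ = (1 − 2β p̄ᵢ) p̄ᵢ − (β/6)(pᵢⁿ⁺¹ − pᵢⁿ)². -/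
/-!
Along the affine interpolants the time derivatives are the difference quotients, so every
integrand is a polynomial of degree at most two in the normalized time `s = (t - t₀) / τ` and is
integrated exactly: an affine function `c + s d` integrates to `τ (c + d / 2)`, its value at the
midpoint, and a product of two affine functions to `τ` times the product of the midpoint values
plus `τ` times the product of the slopes divided by `12`. In the second equation the factors
`1 - 2βp` and `∂ₜψ - p` have slopes `-2β (pⁿ⁺¹ - pⁿ)` and `-(pⁿ⁺¹ - pⁿ)`, which produces the
correction `(β / 6) (pⁿ⁺¹ - pⁿ)²`. Both integrals are then `τ` times a fixed vector dotted with
the test vector; the symmetry of `K` moves `K` off the test vector, and vanishing for all test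
vectors means the vector vanishes, where `τ > 0` and `mᵢ > 0` cancel.
-/

open MeasureTheory intervalIntegral Matrix

theorem deriv_affine_interp (t₀ τ c d t : ℝ) :
    deriv (fun s => c + ((s - t₀) / τ) * d) t = d / τ := by
  have h : HasDerivAt (fun s => c + ((s - t₀) / τ) * d) (1 / τ * d) t :=
    ((((hasDerivAt_id t).sub_const t₀).div_const τ).mul_const d).const_add c
  rw [h.deriv]; ring

theorem integral_comp_sub_div_eq_mul_integral_unit (g : ℝ → ℝ) (t₀ τ : ℝ) :
    ∫ t in t₀..t₀ + τ, g ((t - t₀) / τ) = τ * ∫ s in (0 : ℝ)..1, g s := by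
  obtain rfl | hτ := eq_or_ne τ 0
  · simp
  rw [integral_comp_sub_right (fun x => g (x / τ)), integral_comp_div _ hτ]
  simp [hτ]

theorem integral_unit_quadratic (A B C : ℝ) :
    ∫ s in (0 : ℝ)..1, (A + s * B + s ^ 2 * C) = A + B / 2 + C / 3 := by
  rw [intervalIntegral.integral_add (by simp) (by simp),
    intervalIntegral.integral_add (by simp) (by simp)]
  simp only [intervalIntegral.integral_const, intervalIntegral.integral_mul_const, integral_id,
    integral_pow]
  ring

theorem integral_affine_mul_affine (t₀ τ c d e f : ℝ) :
    ∫ t in t₀..t₀ + τ, (c + ((t - t₀) / τ) * d) * (e + ((t - t₀) / τ) * f)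
      = τ * ((c + d / 2) * (e + f / 2) + d * f / 12) := by
  have hexpand : ∀ s, (c + s * d) * (e + s * f) = c * e + s * (c * f + d * e) + s ^ 2 * (d * f) :=
    fun s => by ring
  rw [integral_comp_sub_div_eq_mul_integral_unit (fun s => (c + s * d) * (e + s * f)),
    funext hexpand, integral_unit_quadratic]
  ring

theorem integral_affine (t₀ τ c d : ℝ) :
    ∫ t in t₀..t₀ + τ, (c + ((t - t₀) / τ) * d) = τ * (c + d / 2) := by
  simpa using integral_affine_mul_affine t₀ τ c d 1 0

theorem integral_sum_mul_const {ι : Type*} [Fintype ι] (a b : ℝ) (f : ι → ℝ → ℝ)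
    (hf : ∀ i, Continuous (f i)) (η : ι → ℝ) :
    ∫ t in a..b, ∑ i, f i t * η i = ∑ i, (∫ t in a..b, f i t) * η i := by
  rw [integral_finsetSum (f := fun i t => f i t * η i)
    fun i _ => ((hf i).mul continuous_const).intervalIntegrable a b]
  simp only [intervalIntegral.integral_mul_const]

theorem Matrix.IsSymm.dotProduct_mulVec_comm {ι R : Type*} [Fintype ι] [CommSemiring R]
    {K : Matrix ι ι R} (hK : K.IsSymm) (v w : ι → R) : v ⬝ᵥ K *ᵥ w = K *ᵥ v ⬝ᵥ w := by
  rw [dotProduct_mulVec, ← vecMul_transpose, hK.eq]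

section Residuals

variable {ι : Type*} [Fintype ι] (m : ι → ℝ) (K : Matrix ι ι ℝ) (α β τ t₀ : ℝ)
  (ψn ψn1 pn pn1 : ι → ℝ)

theorem integral_momentum_residual (hK : K.IsSymm) (η : ι → ℝ) :
    ∫ t in t₀..t₀ + τ,
      (∑ i, m i * (1 - 2 * β * (pn i + ((t - t₀) / τ) * (pn1 i - pn i)))
          * ((pn1 i - pn i) / τ) * η i)
        + α * ((fun i => (ψn1 i - ψn i) / τ) ⬝ᵥ K *ᵥ η)
        + ((fun i => ψn i + ((t - t₀) / τ) * (ψn1 i - ψn i)) ⬝ᵥ K *ᵥ η)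
      = τ * ((fun i => m i * (1 - 2 * β * ((pn i + pn1 i) / 2)) * (pn1 i - pn i) / τ
          + α * (K *ᵥ (ψn1 - ψn)) i / τ + (K *ᵥ fun j => (ψn j + ψn1 j) / 2) i) ⬝ᵥ η) := by
  have hslope : (fun i => (ψn1 i - ψn i) / τ) = τ⁻¹ • (ψn1 - ψn) := by
    ext i; simp [div_eq_inv_mul]
  have hmid : (fun j => (ψn j + ψn1 j) / 2) = ψn + (2⁻¹ : ℝ) • (ψn1 - ψn) := by
    ext j
    simp only [Pi.add_apply, Pi.smul_apply, Pi.sub_apply, smul_eq_mul]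
    ring
  rw [integral_congr (g := fun t => ∑ i,
      (m i * (1 - 2 * β * pn i) * ((pn1 i - pn i) / τ) + α * (K *ᵥ (ψn1 - ψn)) i / τ
          + (K *ᵥ ψn) i
        + ((t - t₀) / τ) * (-2 * β * m i * (pn1 i - pn i) ^ 2 / τ + (K *ᵥ (ψn1 - ψn)) i))
        * η i) fun t _ => ?_,
    integral_sum_mul_const _ _ _ (fun i => by fun_prop)]
  · simp only [integral_affine, hmid, dotProduct, mulVec_add, mulVec_smul, Finset.mul_sum,
      Pi.add_apply, Pi.smul_apply, smul_eq_mul]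
    exact Finset.sum_congr rfl fun i _ => by ring
  · have hψ : (fun i => ψn i + ((t - t₀) / τ) * (ψn1 i - ψn i))
        = ψn + ((t - t₀) / τ) • (ψn1 - ψn) := rfl
    rw [hψ, hslope, hK.dotProduct_mulVec_comm, hK.dotProduct_mulVec_comm]
    simp only [mulVec_add, mulVec_smul, dotProduct, Pi.add_apply, Pi.smul_apply, smul_eq_mul,
      Finset.mul_sum, ← Finset.sum_add_distrib]
    exact Finset.sum_congr rfl fun i _ => by ring

theorem integral_constitutive_residual (q : ι → ℝ) :
    ∫ t in t₀..t₀ + τ,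
      ∑ i, m i * (1 - 2 * β * (pn i + ((t - t₀) / τ) * (pn1 i - pn i)))
        * ((ψn1 i - ψn i) / τ - (pn i + ((t - t₀) / τ) * (pn1 i - pn i))) * q i
      = τ * ((fun i => m i * ((1 - 2 * β * ((pn i + pn1 i) / 2)) * (ψn1 i - ψn i) / τ
          - ((1 - 2 * β * ((pn i + pn1 i) / 2)) * ((pn i + pn1 i) / 2)
            - (β / 6) * (pn1 i - pn i) ^ 2))) ⬝ᵥ q) := by
  rw [integral_congr (g := fun t => ∑ i,
      ((1 - 2 * β * pn i + ((t - t₀) / τ) * (-2 * β * (pn1 i - pn i)))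
        * ((ψn1 i - ψn i) / τ - pn i + ((t - t₀) / τ) * (-(pn1 i - pn i)))) * (m i * q i))
      fun t _ => Finset.sum_congr rfl fun i _ => by ring,
    integral_sum_mul_const _ _ _ (fun i => by fun_prop)]
  simp only [integral_affine_mul_affine, dotProduct, Finset.mul_sum]
  exact Finset.sum_congr rfl fun i _ => by ring

end Residuals

/-- Section 4 of the paper: for piecewise linear approximation in time (`q = 1`),
the variational time-step equations of the structure-preserving Galerkin scheme
for the Westervelt system (tested with constant test functions) are equivalent to
the algebraic one-step scheme in terms of the midpoint values
`ψ̄ = (ψⁿ + ψⁿ⁺¹)/2`, `p̄ = (pⁿ + pⁿ⁺¹)/2`, featuring the correction term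
`(β/6)(pᵢⁿ⁺¹ − pᵢⁿ)²`. -/
theorem variational_step_equiv_one_step_scheme (N : ℕ) (m : Fin N → ℝ)
    (hm : ∀ i, 0 < m i) (K : Matrix (Fin N) (Fin N) ℝ) (hK : K.IsSymm)
    (α β τ t₀ : ℝ) (hτ : 0 < τ) (ψn ψn1 pn pn1 : Fin N → ℝ) :
    ((∀ η : Fin N → ℝ,
        (∫ t in t₀..(t₀ + τ),
          (∑ i, m i * (1 - 2 * β * (pn i + ((t - t₀) / τ) * (pn1 i - pn i)))
              * deriv (fun s => pn i + ((s - t₀) / τ) * (pn1 i - pn i)) t * η i)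
            + α * ((fun i => deriv (fun s => ψn i + ((s - t₀) / τ) * (ψn1 i - ψn i)) t)
                ⬝ᵥ K.mulVec η)
            + ((fun i => ψn i + ((t - t₀) / τ) * (ψn1 i - ψn i)) ⬝ᵥ K.mulVec η)) = 0)
      ∧ (∀ q : Fin N → ℝ,
        (∫ t in t₀..(t₀ + τ),
          ∑ i, m i * (1 - 2 * β * (pn i + ((t - t₀) / τ) * (pn1 i - pn i)))
            * (deriv (fun s => ψn i + ((s - t₀) / τ) * (ψn1 i - ψn i)) t
                - (pn i + ((t - t₀) / τ) * (pn1 i - pn i))) * q i) = 0))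
    ↔ (∀ i,
        (m i * (1 - 2 * β * ((pn i + pn1 i) / 2)) * (pn1 i - pn i) / τ
            + α * (K.mulVec (ψn1 - ψn)) i / τ
            + (K.mulVec (fun j => (ψn j + ψn1 j) / 2)) i = 0)
        ∧ (1 - 2 * β * ((pn i + pn1 i) / 2)) * (ψn1 i - ψn i) / τ
            = (1 - 2 * β * ((pn i + pn1 i) / 2)) * ((pn i + pn1 i) / 2)
              - (β / 6) * (pn1 i - pn i) ^ 2) := by
  simp only [deriv_affine_interp, integral_momentum_residual (hK := hK),
    integral_constitutive_residual, mul_eq_zero, hτ.ne', false_or, dotProduct_eq_zero_iff,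
    funext_iff, Pi.zero_apply, (hm _).ne', sub_eq_zero, ← forall_and]
end
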